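/- arXiv:2509.08652 — 2 statements merged into one kernel-verified Lean document; each statement's English description precedes it below -/
import Mathlib

section
/- Let γ ≥ 0 be a real number. Then the function f(μ) = log(1 + μ) − μ + (1 + μ)·γ/(1 + γ) on the interval [0, ∞) attains its maximum value log(1 + γ), and μ = γ is the unique maximizer. -/
/-- Lagrangian dual transform: for `γ ≥ 0`, the function
`μ ↦ log(1 + μ) − μ + (1 + μ) γ / (1 + γ)` on `[0, ∞)` attains its maximum
value `log(1 + γ)`, and `μ = γ` is the unique maximizer. -/
theorem stmt_11 (γ : ℝ) (hγ : 0 ≤ γ)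
    (f : ℝ → ℝ)
    (hf : f = fun μ => Real.log (1 + μ) - μ + (1 + μ) * γ / (1 + γ)) :
    (∀ μ : ℝ, 0 ≤ μ → f μ ≤ Real.log (1 + γ)) ∧
    f γ = Real.log (1 + γ) ∧
    (∀ μ : ℝ, 0 ≤ μ → f μ = Real.log (1 + γ) → μ = γ) := by
  subst hf
  have h1γ : (0:ℝ) < 1 + γ := by linarith
  have key : ∀ μ : ℝ, 0 ≤ μ → μ ≠ γ →
      Real.log (1 + μ) - μ + (1 + μ) * γ / (1 + γ) < Real.log (1 + γ) := by
    intro μ hμ hne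
    have h1μ : (0:ℝ) < 1 + μ := by linarith
    have ht : (0:ℝ) < (1 + μ) / (1 + γ) := div_pos h1μ h1γ
    have htne : (1 + μ) / (1 + γ) ≠ 1 := by
      intro h
      rw [div_eq_one_iff_eq h1γ.ne'] at h
      apply hne; linarith
    have hlt := Real.log_lt_sub_one_of_pos ht htne
    rw [Real.log_div h1μ.ne' h1γ.ne'] at hlt
    have h2 : (1 + μ) / (1 + γ) - 1 = (μ - γ) / (1 + γ) := by
      field_simp; ring
    rw [h2] at hlt
    have h3 : (μ - γ) / (1 + γ) = μ - (1 + μ) * γ / (1 + γ) := by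
      field_simp; ring
    linarith [hlt, h3 ▸ hlt]
  have hfγ : Real.log (1 + γ) - γ + (1 + γ) * γ / (1 + γ) = Real.log (1 + γ) := by
    field_simp; ring
  refine ⟨?_, hfγ, ?_⟩
  · intro μ hμ
    by_cases h : μ = γ
    · subst h; exact le_of_eq hfγ
    · exact (key μ hμ h).le
  · intro μ hμ heq
    by_contra h
    exact (key μ hμ h).ne heq
end

section
/- Let a ∈ ℂ and let B > 0 be a real number, and set γ = |a|² / B. Then the supremum over all real μ ≥ 0 and all ξ ∈ ℂ of the expression log(1 + μ) − μ + 2·√(1 + μ)·Re(ξ̄ · a) − |ξ|²·(B + |a|²) equals log(1 + γ), and it is attained at μ = γ and ξ = √(1 + γ)·a/(B + |a|²). -/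
/-- Exactness of the combined Lagrangian-dual and quadratic FP transforms in the
rank-one case: with `γ = |a|²/B`, the supremum over `μ ≥ 0` and `ξ ∈ ℂ` of
`log(1+μ) − μ + 2√(1+μ) Re(ξ̄ a) − |ξ|² (B + |a|²)` equals `log(1+γ)`, attained
at `μ = γ` and `ξ = √(1+γ) a / (B + |a|²)`. -/
theorem stmt_12 (a : ℂ) (B : ℝ) (hB : 0 < B) (γ : ℝ) (hγ : γ = ‖a‖ ^ 2 / B)
    (g : ℝ → ℂ → ℝ)
    (hg : g = fun μ ξ => Real.log (1 + μ) - μ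
      + 2 * Real.sqrt (1 + μ) * ((starRingEnd ℂ) ξ * a).re
      - ‖ξ‖ ^ 2 * (B + ‖a‖ ^ 2)) :
    (∀ μ : ℝ, 0 ≤ μ → ∀ ξ : ℂ, g μ ξ ≤ Real.log (1 + γ)) ∧
    g γ ((Real.sqrt (1 + γ) : ℂ) * a / ((B : ℂ) + (‖a‖ ^ 2 : ℝ))) = Real.log (1 + γ) := by
  have hγ0 : 0 ≤ γ := by
    rw [hγ]; positivity
  have hS : 0 < B + ‖a‖ ^ 2 := by positivity
  have ha2 : ‖a‖ ^ 2 = γ * B := by rw [hγ]; field_simp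
  have h1γ : 0 < 1 + γ := by linarith
  constructor
  · intro μ hμ ξ
    have h1μ : 0 < 1 + μ := by linarith
    have ht : Real.sqrt (1 + μ) ^ 2 = 1 + μ := Real.sq_sqrt (by linarith)
    have ht0 : 0 ≤ Real.sqrt (1 + μ) := Real.sqrt_nonneg _
    have hre : ((starRingEnd ℂ) ξ * a).re ≤ ‖ξ‖ * ‖a‖ := by
      calc ((starRingEnd ℂ) ξ * a).re ≤ ‖(starRingEnd ℂ) ξ * a‖ := Complex.re_le_norm _
        _ = ‖ξ‖ * ‖a‖ := by rw [norm_mul, RCLike.norm_conj]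
    -- quadratic bound in ξ
    have hq : 2 * Real.sqrt (1 + μ) * ((starRingEnd ℂ) ξ * a).re
        - ‖ξ‖ ^ 2 * (B + ‖a‖ ^ 2) ≤ (1 + μ) * ‖a‖ ^ 2 / (B + ‖a‖ ^ 2) := by
      set t := Real.sqrt (1 + μ)
      set r := ‖ξ‖
      set S := B + ‖a‖ ^ 2
      have h2 : 2 * t * ((starRingEnd ℂ) ξ * a).re ≤ 2 * t * (r * ‖a‖) := by
        apply mul_le_mul_of_nonneg_left hre (by positivity)
      have key : 2 * t * (r * ‖a‖) - r ^ 2 * S ≤ t ^ 2 * ‖a‖ ^ 2 / S := by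
        rw [le_div_iff₀ hS]
        nlinarith [sq_nonneg (r * S - t * ‖a‖), hS]
      calc _ ≤ 2 * t * (r * ‖a‖) - r ^ 2 * S := by linarith
        _ ≤ t ^ 2 * ‖a‖ ^ 2 / S := key
        _ = (1 + μ) * ‖a‖ ^ 2 / S := by rw [ht]
    -- log bound in μ
    have hlog : Real.log (1 + μ) - μ + (1 + μ) * ‖a‖ ^ 2 / (B + ‖a‖ ^ 2)
        ≤ Real.log (1 + γ) := by
      have h := Real.log_le_sub_one_of_pos (show (0:ℝ) < (1 + μ) / (1 + γ) by positivity)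
      rw [Real.log_div (by linarith) (by linarith)] at h
      have hval : (1 + μ) * ‖a‖ ^ 2 / (B + ‖a‖ ^ 2) = (1 + μ) * γ / (1 + γ) := by
        rw [ha2]; field_simp
      rw [hval]
      have : (1 + μ) / (1 + γ) - 1 = (μ - γ) / (1 + γ) := by field_simp; ring
      rw [this] at h
      have h2 : Real.log (1 + μ) ≤ Real.log (1 + γ) + (μ - γ) / (1 + γ) := by linarith
      have h3 : (1 + μ) * γ / (1 + γ) - μ = -((μ - γ) / (1 + γ)) := by
        field_simp
        ring
      linarith
    rw [hg]
    simp only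
    linarith
  · rw [hg]
    simp only
    set s := Real.sqrt (1 + γ) with hs
    have hs0 : 0 ≤ s := Real.sqrt_nonneg _
    have hs2 : s ^ 2 = 1 + γ := Real.sq_sqrt (by linarith)
    set S := B + ‖a‖ ^ 2 with hSdef
    have hcast : ((B : ℂ) + (‖a‖ ^ 2 : ℝ)) = ((S : ℝ) : ℂ) := by norm_cast
    rw [hcast]
    have hnorm : ‖(s : ℂ) * a / ((S : ℝ) : ℂ)‖ = s * ‖a‖ / S := by
      rw [norm_div, norm_mul, Complex.norm_real, Complex.norm_real,
        Real.norm_of_nonneg hs0, Real.norm_of_nonneg hS.le]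
    have hre : ((starRingEnd ℂ) ((s : ℂ) * a / ((S : ℝ) : ℂ)) * a).re
        = s * ‖a‖ ^ 2 / S := by
      have : (starRingEnd ℂ) ((s : ℂ) * a / ((S : ℝ) : ℂ)) * a
          = (((s * ‖a‖ ^ 2 / S : ℝ)) : ℂ) := by
        rw [map_div₀, map_mul, Complex.conj_ofReal, Complex.conj_ofReal]
        rw [div_mul_eq_mul_div, mul_assoc, Complex.conj_mul']
        push_cast
        ring
      rw [this, Complex.ofReal_re]
    rw [hnorm, hre]
    have : (s * ‖a‖ / S) ^ 2 * S = s ^ 2 * ‖a‖ ^ 2 / S := by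
      field_simp
    rw [this, hs2]
    have hval : (1 + γ) * ‖a‖ ^ 2 / S = γ := by
      rw [ha2, hSdef, ha2]
      field_simp
    have h2 : 2 * s * (s * ‖a‖ ^ 2 / S) = 2 * ((1 + γ) * ‖a‖ ^ 2 / S) := by
      rw [← hs2]; ring
    rw [h2, hval]
    ring
end
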